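/- arXiv:1908.03081 — 4 statements merged into one kernel-verified Lean document; each statement's English description precedes it below -/
import Mathlib

section
/- Let n be a positive integer, let P be an n×n Hermitian positive definite complex matrix, let Ω be a finite index set, and for each i ∈ Ω let c_i ∈ ℂⁿ be a vector and σ_i > 0 a positive real weight. For a subset X ⊆ Ω define Λ_X = ∑_{i∈X} σ_i c_i c_i* and f_D(X) = log det((P + Λ_X)⁻¹). Then f_D is supermodular: for every element a ∈ Ω and all subsets X ⊆ Y ⊆ Ω \ {a}, f_D(Y ∪ {a}) − f_D(Y) ≥ f_D(X ∪ {a}) − f_D(X). -/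
/-!
Write `A_X = P + Λ_X`. By the matrix determinant lemma,
`f_D(X ∪ {a}) - f_D(X) = -log (1 + σ_a c_a* A_X⁻¹ c_a)`.
For `X ⊆ Y` we have `A_X ≤ A_Y` in the Loewner order, and inversion is Loewner-antitone,
so `c_a* A_Y⁻¹ c_a ≤ c_a* A_X⁻¹ c_a`: the marginal gain at `Y` dominates the one at `X`.
-/

open Matrix BigOperators
open scoped ComplexOrder

namespace Matrix

theorem det_add_vecMulVec {m R : Type*} [Fintype m] [DecidableEq m] [CommRing R]
    {A : Matrix m m R} (hA : IsUnit A.det) (u w : m → R) :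
    (A + vecMulVec u w).det = A.det * (1 + w ⬝ᵥ A⁻¹ *ᵥ u) := by
  rw [vecMulVec_eq Unit, det_add_replicateCol_mul_replicateRow hA, Matrix.mul_assoc,
    ← replicateCol_mulVec, det_unique (n := Unit), add_apply, one_apply_eq,
    replicateRow_mul_replicateCol_apply]

theorem posSemidef_ofReal_smul_vecMulVec_star {n : Type*} [Fintype n] {r : ℝ} (hr : 0 ≤ r)
    (v : n → ℂ) : ((r : ℂ) • vecMulVec v (star v)).PosSemidef :=
  (posSemidef_vecMulVec_self_star v).smul (Complex.zero_le_real.mpr hr)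

namespace PosDef

variable {n : Type*} [Fintype n] [DecidableEq n] {A B : Matrix n n ℂ}

open scoped MatrixOrder Matrix.Norms.L2Operator in
theorem inv_sub_inv_posSemidef (hA : A.PosDef) (hAB : (B - A).PosSemidef) :
    (A⁻¹ - B⁻¹).PosSemidef := by
  have hB : B.PosDef := by simpa using hA.add_posSemidef hAB
  simpa [le_iff] using CStarAlgebra.inv_le_inv (a := hA.isUnit.unit) (b := hB.isUnit.unit)
    hA.posSemidef.nonneg hAB

theorem dotProduct_inv_mulVec_le (hA : A.PosDef) (hAB : (B - A).PosSemidef) (v : n → ℂ) :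
    star v ⬝ᵥ B⁻¹ *ᵥ v ≤ star v ⬝ᵥ A⁻¹ *ᵥ v := by
  simpa [sub_mulVec] using (hA.inv_sub_inv_posSemidef hAB).dotProduct_mulVec_nonneg v

theorem re_dotProduct_inv_mulVec_nonneg (hA : A.PosDef) (v : n → ℂ) :
    0 ≤ (star v ⬝ᵥ A⁻¹ *ᵥ v).re :=
  (Complex.nonneg_iff.mp (hA.inv.posSemidef.dotProduct_mulVec_nonneg v)).1

theorem ofReal_re_det (hA : A.PosDef) : (A.det.re : ℂ) = A.det :=
  (Complex.eq_re_of_ofReal_le hA.det_pos.le).symm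

theorem re_det_pos (hA : A.PosDef) : 0 < A.det.re :=
  (Complex.pos_iff.mp hA.det_pos).1

theorem re_det_inv (hA : A.PosDef) : A⁻¹.det.re = A.det.re⁻¹ := by
  rw [det_nonsing_inv, Ring.inverse_eq_inv', ← hA.ofReal_re_det, ← Complex.ofReal_inv,
    Complex.ofReal_re, Complex.ofReal_re]

theorem re_det_add_smul_vecMulVec (hA : A.PosDef) (r : ℝ) (v : n → ℂ) :
    (A + (r : ℂ) • vecMulVec v (star v)).det.re
      = A.det.re * (1 + r * (star v ⬝ᵥ A⁻¹ *ᵥ v).re) := by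
  have hq : ((star v ⬝ᵥ A⁻¹ *ᵥ v).re : ℂ) = star v ⬝ᵥ A⁻¹ *ᵥ v :=
    (Complex.eq_re_of_ofReal_le (hA.inv.posSemidef.dotProduct_mulVec_nonneg v)).symm
  rw [← smul_vecMulVec, det_add_vecMulVec hA.det_pos.ne'.isUnit, mulVec_smul, dotProduct_smul,
    ← hA.ofReal_re_det, ← hq]
  simp

theorem log_re_det_inv_add_smul_vecMulVec (hA : A.PosDef) {r : ℝ} (hr : 0 ≤ r) (v : n → ℂ) :
    Real.log ((A + (r : ℂ) • vecMulVec v (star v))⁻¹.det.re)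
      = Real.log (A⁻¹.det.re) - Real.log (1 + r * (star v ⬝ᵥ A⁻¹ *ᵥ v).re) := by
  have hAv := hA.add_posSemidef (posSemidef_ofReal_smul_vecMulVec_star hr v)
  have hq := hA.re_dotProduct_inv_mulVec_nonneg v
  have hgain : 0 < 1 + r * (star v ⬝ᵥ A⁻¹ *ᵥ v).re := by positivity
  rw [hAv.re_det_inv, hA.re_det_inv, hA.re_det_add_smul_vecMulVec, Real.log_inv, Real.log_inv,
    Real.log_mul hA.re_det_pos.ne' hgain.ne']
  ring

theorem log_re_det_inv_add_smul_vecMulVec_sub_le (hA : A.PosDef) (hAB : (B - A).PosSemidef)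
    {r : ℝ} (hr : 0 ≤ r) (v : n → ℂ) :
    Real.log ((A + (r : ℂ) • vecMulVec v (star v))⁻¹.det.re) - Real.log (A⁻¹.det.re)
      ≤ Real.log ((B + (r : ℂ) • vecMulVec v (star v))⁻¹.det.re) - Real.log (B⁻¹.det.re) := by
  have hB : B.PosDef := by simpa using hA.add_posSemidef hAB
  have hqB := hB.re_dotProduct_inv_mulVec_nonneg v
  rw [hA.log_re_det_inv_add_smul_vecMulVec hr, hB.log_re_det_inv_add_smul_vecMulVec hr,
    sub_sub_cancel_left, sub_sub_cancel_left, neg_le_neg_iff]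
  gcongr
  exact hA.dotProduct_inv_mulVec_le hAB v

end PosDef

end Matrix

theorem d_optimal_supermodular_general
    {n : ℕ} {ι : Type*} [DecidableEq ι]
    (P : Matrix (Fin n) (Fin n) ℂ) (hP : P.PosDef)
    (Ω : Finset ι) (c : ι → (Fin n → ℂ)) (σ : ι → ℝ)
    (hσ : ∀ i ∈ Ω, 0 < σ i)
    (fD : Finset ι → ℝ)
    (hfD : ∀ X : Finset ι,
      fD X = Real.log (((P + ∑ i ∈ X, (σ i : ℂ) • vecMulVec (c i) (star (c i)))⁻¹).det.re))
    (a : ι) (ha : a ∈ Ω)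
    (X Y : Finset ι) (hXY : X ⊆ Y) (hY : Y ⊆ Ω \ {a}) :
    fD (insert a Y) - fD Y ≥ fD (insert a X) - fD X := by
  set Λ : Finset ι → Matrix (Fin n) (Fin n) ℂ :=
    fun Z => ∑ i ∈ Z, (σ i : ℂ) • vecMulVec (c i) (star (c i))
  have hΛ : ∀ Z ⊆ Ω, (Λ Z).PosSemidef := fun Z hZ =>
    posSemidef_sum Z fun i hi => posSemidef_ofReal_smul_vecMulVec_star (hσ i (hZ hi)).le (c i)
  have haY : a ∉ Y := fun h => (Finset.mem_sdiff.mp (hY h)).2 (Finset.mem_singleton_self a)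
  have hYΩ : Y ⊆ Ω := hY.trans Finset.sdiff_subset
  have hins : ∀ Z, a ∉ Z →
      P + Λ (insert a Z) = P + Λ Z + (σ a : ℂ) • vecMulVec (c a) (star (c a)) := fun Z haZ => by
    simp only [Λ, Finset.sum_insert haZ]
    abel
  have hΛ_le : (P + Λ Y - (P + Λ X)).PosSemidef := by
    simpa [Λ, ← Finset.sum_sdiff hXY] using hΛ (Y \ X) (Finset.sdiff_subset.trans hYΩ)
  rw [hfD, hfD, hfD, hfD, hins Y haY, hins X fun h => haY (hXY h)]
  exact (hP.add_posSemidef (hΛ X (hXY.trans hYΩ))).log_re_det_inv_add_smul_vecMulVec_sub_le hΛ_le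
    (hσ a ha).le (c a)

/-- Supermodularity of the D-optimal metric
`f_D(X) = log det((P + Λ_X)⁻¹)`, where `Λ_X = ∑_{i ∈ X} σ_i c_i c_i*` and `P`
is Hermitian positive definite: for every `a ∈ Ω` and subsets
`X ⊆ Y ⊆ Ω \ {a}`, `f_D(Y ∪ {a}) − f_D(Y) ≥ f_D(X ∪ {a}) − f_D(X)`. -/
theorem d_optimal_supermodular
    {n : ℕ} (hn : 0 < n) {ι : Type*} [DecidableEq ι]
    (P : Matrix (Fin n) (Fin n) ℂ) (hP : P.PosDef)
    (Ω : Finset ι) (c : ι → (Fin n → ℂ)) (σ : ι → ℝ)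
    (hσ : ∀ i ∈ Ω, 0 < σ i)
    (fD : Finset ι → ℝ)
    (hfD : ∀ X : Finset ι,
      fD X = Real.log (((P + ∑ i ∈ X, (σ i : ℂ) • vecMulVec (c i) (star (c i)))⁻¹).det.re))
    (a : ι) (ha : a ∈ Ω)
    (X Y : Finset ι) (hXY : X ⊆ Y) (hY : Y ⊆ Ω \ {a}) :
    fD (insert a Y) - fD Y ≥ fD (insert a X) - fD X :=
  d_optimal_supermodular_general P hP Ω c σ hσ fD hfD a ha X Y hXY hY
end

section
/- Let P be an n×n Hermitian positive definite complex matrix and let Λ_a and Λ be n×n Hermitian positive semidefinite complex matrices. Then for every γ ≥ 0, tr((P + Λ_a + γΛ)⁻¹ Λ) ≤ tr((P + γΛ)⁻¹ Λ). -/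
open Matrix
open scoped ComplexOrder

/-!
Adding the positive semidefinite `Λa` to the positive definite `B = P + γΛ` can only decrease the
inverse in the Loewner order: `B⁻¹ - (B + Λa)⁻¹` is the congruence of `Λa + Λa B⁻¹ Λa` by
`(B + Λa)⁻¹`. The trace of a product of two positive semidefinite matrices is nonnegative, so
pairing this difference with `Λ` gives the inequality.
-/

namespace Matrix

variable {n 𝕜 : Type*} [Fintype n] [DecidableEq n] [RCLike 𝕜]

theorem inv_sub_inv_add_eq {α : Type*} [CommRing α] {B C : Matrix n n α} (hB : IsUnit B)
    (hBC : IsUnit (B + C)) :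
    B⁻¹ - (B + C)⁻¹ = (B + C)⁻¹ * (C + C * B⁻¹ * C) * (B + C)⁻¹ := by
  have hfactor : C + C * B⁻¹ * C = (B + C) * (B⁻¹ * C) := by
    rw [add_mul, ← Matrix.mul_assoc, mul_nonsing_inv B ((isUnit_iff_isUnit_det B).mp hB), one_mul,
      ← Matrix.mul_assoc, add_comm]
  rw [inv_sub_inv (iff_of_true hB hBC), add_sub_cancel_left, hfactor,
    nonsing_inv_mul_cancel_left _ _ ((isUnit_iff_isUnit_det _).mp hBC), Matrix.mul_assoc]

theorem PosDef.posSemidef_inv_sub_inv_add {B C : Matrix n n 𝕜} (hB : B.PosDef)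
    (hC : C.PosSemidef) : (B⁻¹ - (B + C)⁻¹).PosSemidef := by
  have hBC := hB.add_posSemidef hC
  rw [inv_sub_inv_add_eq hB.isUnit hBC.isUnit]
  have hmid : (C + C * B⁻¹ * C).PosSemidef := by
    refine hC.add ?_
    simpa only [hC.isHermitian.eq] using hB.inv.posSemidef.conjTranspose_mul_mul_same C
  simpa only [hBC.inv.isHermitian.eq] using hmid.conjTranspose_mul_mul_same (B + C)⁻¹

open scoped MatrixOrder Matrix.Norms.L2Operator in
theorem PosSemidef.trace_mul_nonneg {M N : Matrix n n 𝕜} (hM : M.PosSemidef) (hN : N.PosSemidef) :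
    0 ≤ (M * N).trace := by
  obtain ⟨D, rfl⟩ := CStarAlgebra.nonneg_iff_eq_star_mul_self.mp hN.nonneg
  rw [star_eq_conjTranspose, ← Matrix.mul_assoc, trace_mul_comm, ← Matrix.mul_assoc]
  exact (hM.mul_mul_conjTranspose_same D).trace_nonneg

end Matrix

/-- For `P` Hermitian positive definite and `Λa`, `Λ` Hermitian
positive semidefinite, and every `γ ≥ 0`,
`tr((P + Λa + γΛ)⁻¹ Λ) ≤ tr((P + γΛ)⁻¹ Λ)` (both traces are real; the
inequality is stated in the standard partial order on `ℂ`). -/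
theorem trace_inv_mul_le
    {n : ℕ} (P Λa Λ : Matrix (Fin n) (Fin n) ℂ)
    (hP : P.PosDef) (hΛa : Λa.PosSemidef) (hΛ : Λ.PosSemidef)
    (γ : ℝ) (hγ : 0 ≤ γ) :
    ((P + Λa + (γ : ℂ) • Λ)⁻¹ * Λ).trace ≤ ((P + (γ : ℂ) • Λ)⁻¹ * Λ).trace := by
  have hB : (P + (γ : ℂ) • Λ).PosDef :=
    hP.add_posSemidef (hΛ.smul (by exact_mod_cast hγ))
  have hdiff := hB.posSemidef_inv_sub_inv_add hΛa
  rw [add_right_comm]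
  simpa only [Matrix.sub_mul, trace_sub, sub_nonneg] using hdiff.trace_mul_nonneg hΛ
end

section
/- Let b > 0 be a real number, let X be a finite nonempty set, and for each i ∈ X let c_i be a real number with 0 ≤ c_i ≤ b; suppose ∑_{i∈X} c_i = γ b for some γ ∈ (0, 1]. Let a be an additional element (a ∉ X) with cost c_a satisfying b − γb < c_a ≤ b. Then β_a := 1 − (1 − c_a/b) · ∏_{i∈X} (1 − c_i/b) satisfies β_a ≥ 1 − γ e^{−γ}; in particular β_a > 1 − e^{−1} whenever the inequality on c_a is strict. -/
open BigOperators

/-- Budget-constrained greedy bound with the extra element `a`.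
If `b > 0`, the costs `c_i` of the greedily selected set `X` satisfy
`0 ≤ c_i ≤ b` and `∑_{i∈X} c_i = γ b` with `γ ∈ (0,1]`, and the extra element
`a ∉ X` has cost `b − γb < c_a ≤ b`, then
`β_a = 1 − (1 − c_a/b) ∏_{i∈X}(1 − c_i/b)` satisfies `β_a ≥ 1 − γ e^{−γ}`;
in particular `β_a > 1 − e^{−1}` (the lower inequality on `c_a` being strict). -/
theorem beta_a_lower_bound
    {ι : Type*} (b : ℝ) (hb : 0 < b)
    (X : Finset ι) (hX : X.Nonempty)
    (c : ι → ℝ) (hc : ∀ i ∈ X, 0 ≤ c i ∧ c i ≤ b)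
    (γ : ℝ) (hγ0 : 0 < γ) (hγ1 : γ ≤ 1)
    (hsum : ∑ i ∈ X, c i = γ * b)
    (a : ι) (haX : a ∉ X) (ca : ℝ) (hca1 : b - γ * b < ca) (hca2 : ca ≤ b) :
    1 - γ * Real.exp (-γ) ≤ 1 - (1 - ca / b) * ∏ i ∈ X, (1 - c i / b) ∧
      1 - Real.exp (-1) < 1 - (1 - ca / b) * ∏ i ∈ X, (1 - c i / b) := by
  have hprod_nonneg : 0 ≤ ∏ i ∈ X, (1 - c i / b) := by
    apply Finset.prod_nonneg
    intro i hi
    have := (hc i hi).2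
    have : c i / b ≤ 1 := (div_le_one hb).mpr this
    linarith
  have hprod_le : ∏ i ∈ X, (1 - c i / b) ≤ Real.exp (-γ) := by
    have h1 : ∏ i ∈ X, (1 - c i / b) ≤ ∏ i ∈ X, Real.exp (-(c i / b)) := by
      apply Finset.prod_le_prod
      · intro i hi
        have : c i / b ≤ 1 := (div_le_one hb).mpr (hc i hi).2
        linarith
      · intro i hi
        have := Real.add_one_le_exp (-(c i / b))
        linarith
    have h2 : ∏ i ∈ X, Real.exp (-(c i / b)) = Real.exp (∑ i ∈ X, -(c i / b)) :=
      (Real.exp_sum X _).symm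
    have h3 : ∑ i ∈ X, -(c i / b) = -γ := by
      have : ∑ i ∈ X, -(c i / b) = -((∑ i ∈ X, c i) / b) := by
        rw [Finset.sum_div]
        simp
      rw [this, hsum]
      field_simp
    rw [h2, h3] at h1
    exact h1
  have hca_lt : 1 - ca / b < γ := by
    have h : (b - γ * b) / b < ca / b := by
      apply div_lt_div_of_pos_right hca1 hb
    have : (b - γ * b) / b = 1 - γ := by field_simp
    rw [this] at h
    linarith
  have hca_nonneg : 0 ≤ 1 - ca / b := by
    have : ca / b ≤ 1 := (div_le_one hb).mpr hca2
    linarith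
  have key : (1 - ca / b) * ∏ i ∈ X, (1 - c i / b) < γ * Real.exp (-γ) := by
    calc (1 - ca / b) * ∏ i ∈ X, (1 - c i / b)
        ≤ (1 - ca / b) * Real.exp (-γ) := by
          apply mul_le_mul_of_nonneg_left hprod_le hca_nonneg
      _ < γ * Real.exp (-γ) := by
          apply mul_lt_mul_of_pos_right hca_lt (Real.exp_pos _)
  have hγe : γ * Real.exp (-γ) ≤ Real.exp (-1) := by
    have h := Real.add_one_le_exp (γ - 1)
    have : γ ≤ Real.exp (γ - 1) := by linarith
    calc γ * Real.exp (-γ) ≤ Real.exp (γ - 1) * Real.exp (-γ) := by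
          apply mul_le_mul_of_nonneg_right this (Real.exp_pos _).le
      _ = Real.exp (-1) := by rw [← Real.exp_add]; ring_nf
  constructor
  · linarith
  · linarith
end

section
/- Let Σ_p be an n×n Hermitian positive definite complex matrix, Σ_m an m×m Hermitian positive definite complex matrix, and C an m×n complex matrix. For an n×m complex matrix K define J(K) = Σ_p + K (Σ_m + C Σ_p C*) K* − K C Σ_p − Σ_p C* K*. Then K* := Σ_p C* (C Σ_p C* + Σ_m)⁻¹ minimizes the trace of J: for every n×m complex matrix K, tr(J(K)) ≥ tr(J(K*)), with tr(J(K)) real for all K since J(K) is Hermitian. -/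
open Matrix
open scoped ComplexOrder

/-! Completing the square: for `J(K) = P + K S Kᴴ - K Bᴴ - B Kᴴ` with `S` Hermitian and
`K₀ S = B`, one has `J(K) = J(K₀) + (K - K₀) S (K - K₀)ᴴ`; the correction term is positive
semidefinite when `S` is, so its trace is nonnegative. With `S = Σ_m + C Σ_p Cᴴ` and `B = Σ_p Cᴴ`
the gain `K₀ = Σ_p Cᴴ S⁻¹` solves `K₀ S = B`. -/

namespace Matrix

variable {ι κ R : Type*} [Fintype κ] [Ring R] [StarRing R]

def posteriorCov (P : Matrix ι ι R) (S : Matrix κ κ R) (B K : Matrix ι κ R) : Matrix ι ι R :=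
  P + K * S * Kᴴ - K * Bᴴ - B * Kᴴ

theorem posteriorCov_eq_add_of_mul_eq {P : Matrix ι ι R} {S : Matrix κ κ R} {B K₀ : Matrix ι κ R}
    (hS : S.IsHermitian) (hK₀ : K₀ * S = B) (K : Matrix ι κ R) :
    posteriorCov P S B K = posteriorCov P S B K₀ + (K - K₀) * S * (K - K₀)ᴴ := by
  subst hK₀
  simp only [posteriorCov, conjTranspose_mul, hS.eq, conjTranspose_sub, Matrix.sub_mul,
    Matrix.mul_sub, Matrix.mul_assoc]
  abel

theorem trace_posteriorCov_le [Fintype ι] [PartialOrder R] [AddLeftMono R]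
    {P : Matrix ι ι R} {S : Matrix κ κ R} {B K₀ : Matrix ι κ R}
    (hS : S.PosSemidef) (hK₀ : K₀ * S = B) (K : Matrix ι κ R) :
    (posteriorCov P S B K₀).trace ≤ (posteriorCov P S B K).trace := by
  rw [posteriorCov_eq_add_of_mul_eq hS.isHermitian hK₀ K, trace_add]
  exact le_add_of_nonneg_right (hS.mul_mul_conjTranspose_same (K - K₀)).trace_nonneg

end Matrix

/-- Optimality of the Kalman-type gain. For `Sp` (= Σ_prior)
Hermitian positive definite, `Sm` (= Σ_meas) Hermitian positive definite and
`C` an `m×n` complex matrix, define the posterior covariance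
`J(K) = Sp + K (Sm + C Sp C*) K* − K C Sp − Sp C* K*`.  Then the gain
`K* = Sp C* (C Sp C* + Sm)⁻¹` minimizes the trace of `J`:
`tr(J(K)) ≥ tr(J(K*))` for every `n×m` matrix `K` (all traces are real since
`J(K)` is Hermitian; the inequality is in the standard partial order on `ℂ`). -/
theorem optimal_gain_minimizes_trace
    {n m : ℕ} (Sp : Matrix (Fin n) (Fin n) ℂ) (hSp : Sp.PosDef)
    (Sm : Matrix (Fin m) (Fin m) ℂ) (hSm : Sm.PosDef)
    (C : Matrix (Fin m) (Fin n) ℂ)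
    (J : Matrix (Fin n) (Fin m) ℂ → Matrix (Fin n) (Fin n) ℂ)
    (hJ : ∀ K, J K = Sp + K * (Sm + C * Sp * Cᴴ) * Kᴴ - K * (C * Sp) - Sp * Cᴴ * Kᴴ) :
    ∀ K : Matrix (Fin n) (Fin m) ℂ,
      (J (Sp * Cᴴ * (C * Sp * Cᴴ + Sm)⁻¹)).trace ≤ (J K).trace := by
  set S := Sm + C * Sp * Cᴴ
  have hS : S.PosDef := hSm.add_posSemidef (hSp.posSemidef.mul_mul_conjTranspose_same C)
  have hJ_eq : J = posteriorCov Sp S (Sp * Cᴴ) := funext fun K => by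
    rw [hJ, posteriorCov, conjTranspose_mul, conjTranspose_conjTranspose, hSp.isHermitian.eq]
  have hK₀ : Sp * Cᴴ * (C * Sp * Cᴴ + Sm)⁻¹ * S = Sp * Cᴴ := by
    rw [add_comm (C * Sp * Cᴴ)]
    exact nonsing_inv_mul_cancel_right _ _ ((isUnit_iff_isUnit_det S).mp hS.isUnit)
  rw [hJ_eq]
  exact trace_posteriorCov_le hS.posSemidef hK₀
end
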